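/- Let T be any map from 2×2 real payoff matrices to pairs of mixed strategies in Δ² × Δ² such that T(A) is a Nash equilibrium of the zero-sum game A for every A, and such that T applied to the all-zeros matrix returns a pure-strategy pair (a pair of vertices of the simplex). Then for every δ > 0 there exist matrices A, A' with ‖A − A'‖∞ < δ such that ‖T(A) − T(A')‖₁ ≥ 1, where the ℓ¹ distance between strategy pairs is the sum of the ℓ¹ distances of the row components and of the column components. Hence any vertex-returning equilibrium selector is discontinuous at degeneracy, with an Ω(1) jump. -/
import Mathlib


open Matrix BigOperators

/-- Exploitability of a strategy pair `(p, q)` in the zero-sum game with payoff matrix `A`: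
row regret plus column regret. -/
noncomputable def exploit {n : ℕ} (A : Matrix (Fin n) (Fin n) ℝ) (p q : Fin n → ℝ) : ℝ :=
  ((⨆ i, A.mulVec q i) - p ⬝ᵥ A.mulVec q) + (p ⬝ᵥ A.mulVec q - ⨅ j, Matrix.vecMul p A j)

/-- Max-entry norm of a matrix: `max_{i,j} |A i j|`. -/
noncomputable def maxEntry {n m : ℕ} (A : Matrix (Fin n) (Fin m) ℝ) : ℝ := ⨆ i, ⨆ j, |A i j|

/-- `(p, q)` is a Nash equilibrium of the zero-sum game `A`:
no mixed deviation of either player improves that player's payoff. -/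
def isNash {n : ℕ} (A : Matrix (Fin n) (Fin n) ℝ) (p q : Fin n → ℝ) : Prop :=
  ∀ p' q' : Fin n → ℝ, p' ∈ stdSimplex ℝ (Fin n) → q' ∈ stdSimplex ℝ (Fin n) →
    p' ⬝ᵥ A.mulVec q ≤ p ⬝ᵥ A.mulVec q ∧ p ⬝ᵥ A.mulVec q ≤ p ⬝ᵥ A.mulVec q'

/-- Any equilibrium selector for 2×2 zero-sum games that returns a pure-strategy pair at
the all-zeros matrix has an Ω(1) discontinuity: arbitrarily close games receive strategy
pairs at ℓ¹ distance at least 1. -/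
theorem vertex_selector_discontinuous
    (T : Matrix (Fin 2) (Fin 2) ℝ → (Fin 2 → ℝ) × (Fin 2 → ℝ))
    (hmem : ∀ A, (T A).1 ∈ stdSimplex ℝ (Fin 2) ∧ (T A).2 ∈ stdSimplex ℝ (Fin 2))
    (hnash : ∀ A, isNash A (T A).1 (T A).2)
    (hvertex : ∃ i j : Fin 2,
      (T 0).1 = (Pi.single i 1 : Fin 2 → ℝ) ∧ (T 0).2 = (Pi.single j 1 : Fin 2 → ℝ)) :
    ∀ δ : ℝ, 0 < δ → ∃ A A' : Matrix (Fin 2) (Fin 2) ℝ, maxEntry (A - A') < δ ∧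
      1 ≤ (∑ k, |(T A).1 k - (T A').1 k|) + ∑ k, |(T A).2 k - (T A').2 k| := by
  intro δ hδ
  set ε := δ / 2 with hε
  have hεpos : 0 < ε := by positivity
  set A' : Matrix (Fin 2) (Fin 2) ℝ := Matrix.of ![![ε, -ε], ![-ε, ε]] with hA'
  refine ⟨0, A', ?_, ?_⟩
  · have hle : maxEntry ((0 : Matrix (Fin 2) (Fin 2) ℝ) - A') ≤ ε := by
      apply ciSup_le; intro i
      apply ciSup_le; intro j
      fin_cases i <;> fin_cases j <;>
        simp [A', Matrix.sub_apply, abs_le, le_of_lt hεpos] <;> linarith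
    linarith
  · -- simplex facts for pure strategies
    have hsingle : ∀ i : Fin 2, (Pi.single i 1 : Fin 2 → ℝ) ∈ stdSimplex ℝ (Fin 2) := by
      intro i
      constructor
      · intro k
        rcases eq_or_ne k i with h | h <;> simp [Pi.single_apply, h]
      · simp
    set p := (T A').1 with hp
    set q := (T A').2 with hq
    obtain ⟨hpS, hqS⟩ := hmem A'
    have hn := hnash A'
    have h00 := hn (Pi.single 0 1) (Pi.single 0 1) (hsingle 0) (hsingle 0)
    have h11 := hn (Pi.single 1 1) (Pi.single 1 1) (hsingle 1) (hsingle 1)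
    have hr0 := h00.1
    have hr1 := h11.1
    have hc0 := h00.2
    have hc1 := h11.2
    simp only [dotProduct, Matrix.mulVec, Matrix.vecMul, Fin.sum_univ_two,
      Pi.single_apply, A', Matrix.of_apply, Matrix.cons_val_zero, Matrix.cons_val_one,
      Matrix.head_cons] at hr0 hr1 hc0 hc1
    norm_num at hr0 hr1 hc0 hc1
    -- deduce q 0 = q 1 = 1/2
    have hqsum : q 0 + q 1 = 1 := by
      have := hqS.2; simpa [Fin.sum_univ_two] using this
    have hq0 : q 0 = 1/2 := by nlinarith [hr0, hr1, hc0, hc1, hεpos, hqsum]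
    have hq1 : q 1 = 1/2 := by linarith
    obtain ⟨i, j, hTi, hTj⟩ := hvertex
    have h2 : (∑ k, |(T 0).2 k - q k|) = 1 := by
      rw [hTj]
      fin_cases j <;> simp [Fin.sum_univ_two, Pi.single_apply, hq0, hq1] <;> norm_num [abs_of_pos]
    have h1 : (0:ℝ) ≤ ∑ k, |(T 0).1 k - p k| :=
      Finset.sum_nonneg fun k _ => abs_nonneg _
    rw [← hp, ← hq] at *
    linarith [h1, h2.ge]
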